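/- Let d ≥ 2 and let T be an infinite d-ary rooted tree, and let G be a closed subgroup of Aut(T). Then the lower Minkowski dimension of G equals ((d−1)/log(d!))·liminf_{n→∞} (1/d^n)·log|r_n(G)|, the upper Minkowski dimension of G equals ((d−1)/log(d!))·limsup_{n→∞} (1/d^n)·log|r_n(G)|, and moreover 0 ≤ dim_lower(G) ≤ dim_upper(G) ≤ 1. -/

import Mathlib

open scoped Classical

noncomputable section

/-! ### Minkowski dimension machinery for groups of automorphisms of rooted trees

A rooted tree is presented by its levels `V 0, V 1, V 2, …` (with `V 0` the root level)
together with parent maps `V (n+1) → V n`.  An automorphism is a family of permutations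
of the levels commuting with the parent maps; it is in particular determined by a point of
`∀ k, Equiv.Perm (V k)`.  The restriction `r_n σ` of `σ` to the height-`n` subtree is the
tuple `(σ 0, …, σ n)`, and the natural metric is
`d(σ,τ) = inf { d!^{-(dⁿ-1)/(d-1)} : r_n σ = r_n τ }`. -/

/-- The exponent `(dⁿ - 1)/(d - 1) = 1 + d + ⋯ + d^(n-1)`. -/
def scaleExp (d n : ℕ) : ℕ := ∑ i ∈ Finset.range n, d ^ i

/-- The scale `ε_n = d!^{-(dⁿ-1)/(d-1)}`, i.e. `1/|Aut(Tₙᶜᵒᵐ)|`. -/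
def treeScale (d n : ℕ) : ℝ := ((d.factorial : ℝ) ^ scaleExp d n)⁻¹

/-- Two families of level permutations restrict to the same automorphism of the
height-`n` subtree. -/
def AgreeUpTo {V : ℕ → Type*} (n : ℕ) (σ τ : ∀ k, Equiv.Perm (V k)) : Prop :=
  ∀ k, k ≤ n → σ k = τ k

/-- The natural metric on automorphisms of a rooted `d`-ary tree:
`d(σ,τ) = inf { d!^{-(dⁿ-1)/(d-1)} : σ and τ agree on the height-n subtree }`. -/
def treeDist {V : ℕ → Type*} (d : ℕ) (σ τ : ∀ k, Equiv.Perm (V k)) : ℝ :=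
  sInf {x : ℝ | ∃ n : ℕ, AgreeUpTo n σ τ ∧ x = treeScale d n}

/-- `N_{ε_n}(G)`: the least number of balls of radius `ε_n = treeScale d n` needed to
cover `G`. -/
def coverNum {V : ℕ → Type*} (d : ℕ) (G : Set (∀ k, Equiv.Perm (V k))) (n : ℕ) : ℕ :=
  sInf {m : ℕ | ∃ s : Finset (∀ k, Equiv.Perm (V k)), s.card = m ∧
    G ⊆ ⋃ σ ∈ s, {τ | treeDist d σ τ ≤ treeScale d n}}

/-- The lower Minkowski dimension `liminf_{ε → 0} log N_ε(G) / log (1/ε)` (computed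
along the scales `ε_n` of the metric). -/
def dimLower {V : ℕ → Type*} (d : ℕ) (G : Set (∀ k, Equiv.Perm (V k))) : ℝ :=
  Filter.liminf
    (fun n : ℕ => Real.log (coverNum d G n : ℝ) / Real.log (1 / treeScale d n)) Filter.atTop

/-- The upper Minkowski dimension `limsup_{ε → 0} log N_ε(G) / log (1/ε)` (computed
along the scales `ε_n` of the metric). -/
def dimUpper {V : ℕ → Type*} (d : ℕ) (G : Set (∀ k, Equiv.Perm (V k))) : ℝ :=
  Filter.limsup
    (fun n : ℕ => Real.log (coverNum d G n : ℝ) / Real.log (1 / treeScale d n)) Filter.atTop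

/-- The Minkowski dimension of `G` exists and equals `x`. -/
def HasDim {V : ℕ → Type*} (d : ℕ) (G : Set (∀ k, Equiv.Perm (V k))) (x : ℝ) : Prop :=
  dimLower d G = x ∧ dimUpper d G = x

/-- `G` is closed for the natural metric. -/
def IsDistClosed {V : ℕ → Type*} (d : ℕ) (G : Set (∀ k, Equiv.Perm (V k))) : Prop :=
  ∀ σ, (∀ ε : ℝ, 0 < ε → ∃ τ ∈ G, treeDist d σ τ ≤ ε) → σ ∈ G

/-- The closure of `G` for the natural metric. -/
def distClosure {V : ℕ → Type*} (d : ℕ) (G : Set (∀ k, Equiv.Perm (V k))) :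
    Set (∀ k, Equiv.Perm (V k)) :=
  {σ | ∀ ε : ℝ, 0 < ε → ∃ τ ∈ G, treeDist d σ τ ≤ ε}

/-- `|r_n(G)|`: the cardinality of the restriction of `G` to the height-`n` subtree. -/
def levelCard {V : ℕ → Type*} (G : Set (∀ k, Equiv.Perm (V k))) (n : ℕ) : ℕ :=
  Nat.card ((fun (σ : ∀ k, Equiv.Perm (V k)) (k : Fin (n + 1)) => σ k.1) '' G)

end
noncomputable section

/-- An infinite `d`-ary rooted tree, presented by its levels: `V n` is the set of
level-`n` vertices, `parent` maps a vertex to its parent, there is a unique root,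
and every vertex has at least `1` and at most `d` children. -/
structure DaryTree (d : ℕ) where
  V : ℕ → Type
  parent : ∀ n, V (n + 1) → V n
  root_card : Nat.card (V 0) = 1
  child_lb : ∀ n (v : V n), 1 ≤ Nat.card {w : V (n + 1) // parent n w = v}
  child_ub : ∀ n (v : V n), Nat.card {w : V (n + 1) // parent n w = v} ≤ d

/-- The group of automorphisms of a rooted tree presented by levels and parent maps:
families of level permutations fixing the root level structure and commuting with
the parent maps. -/
def autGroup {V : ℕ → Type*} (parent : ∀ n, V (n + 1) → V n) :
    Subgroup (∀ n, Equiv.Perm (V n)) where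
  carrier := {σ | ∀ n (v : V (n + 1)), parent n (σ (n + 1) v) = σ n (parent n v)}
  one_mem' := by intro n v; rfl
  mul_mem' := by
    intro a b ha hb n v
    simp only [Pi.mul_apply, Equiv.Perm.mul_apply]
    rw [ha, hb]
  inv_mem' := by
    intro a ha n v
    simp only [Pi.inv_apply]
    have h := ha n ((a (n + 1))⁻¹ v)
    rw [show (a (n + 1)) ((a (n + 1))⁻¹ v) = v from (a (n + 1)).apply_symm_apply v] at h
    rw [h]
    exact ((a n).symm_apply_apply _).symm

/-- The automorphism group `Aut(T)` of an infinite `d`-ary rooted tree. -/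
def DaryTree.aut {d : ℕ} (T : DaryTree d) : Subgroup (∀ n, Equiv.Perm (T.V n)) :=
  autGroup T.parent

/-- A `d`-ary rooted tree is complete if every vertex has exactly `d` children. -/
def DaryTree.IsComplete {d : ℕ} (T : DaryTree d) : Prop :=
  ∀ n (v : T.V n), Nat.card {w : T.V (n + 1) // T.parent n w = v} = d

end

/-!
Balls of radius `ε_n` are exactly the fibres of the restriction `r_n`, so `N_{ε_n}(G) = |r_n(G)|`.
An element of `r_{n+1}(G)` lying over a given element of `r_n(G)` is determined by how it maps
the at most `d` children of each of the at most `dⁿ` level-`n` vertices, whence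
`|r_n(G)| ≤ d!^{(dⁿ-1)/(d-1)} = 1/ε_n` and every ratio `log N_{ε_n}(G) / log (1/ε_n)` lies in
`[0, 1]`. As `log (1/ε_n) = (dⁿ - 1) log d! / (d - 1)` is asymptotic to `dⁿ log d! / (d - 1)`,
these ratios have the same liminf and limsup as `(d - 1) / log d! · log |r_n(G)| / dⁿ`.
-/

open Filter Topology

section LiminfLimsup

variable {ι : Type*} {l : Filter ι} {u v : ι → ℝ}

lemma Real.liminf_const_mul {c : ℝ} (hc : 0 < c) :
    liminf (fun i => c * u i) l = c * liminf u l := by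
  rw [liminf_eq, liminf_eq, ← smul_eq_mul, ← Real.sSup_smul_of_nonneg hc.le]
  congr 1
  ext a
  simp only [Set.mem_smul_set_iff_inv_smul_mem₀ hc.ne', Set.mem_ofPred_eq, smul_eq_mul,
    inv_mul_le_iff₀ hc]

lemma Real.limsup_const_mul {c : ℝ} (hc : 0 < c) :
    limsup (fun i => c * u i) l = c * limsup u l := by
  rw [limsup_eq, limsup_eq, ← smul_eq_mul, ← Real.sInf_smul_of_nonneg hc.le]
  congr 1
  ext a
  simp only [Set.mem_smul_set_iff_inv_smul_mem₀ hc.ne', Set.mem_ofPred_eq, smul_eq_mul,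
    le_inv_mul_iff₀ hc]

lemma tendsto_mul_sub_one_zero {w : ι → ℝ} (h0 : ∀ i, 0 ≤ u i) (h1 : ∀ i, u i ≤ 1)
    (hw : Tendsto w l (𝓝 1)) : Tendsto (fun i => u i * (w i - 1)) l (𝓝 0) := by
  refine isBoundedUnder_le_mul_tendsto_zero (isBoundedUnder_of ⟨1, fun i => ?_⟩) ?_
  · simpa [abs_of_nonneg (h0 i)] using h1 i
  · simpa using hw.sub_const 1

variable [l.NeBot]

lemma liminf_add_of_tendsto_zero (hu : IsBoundedUnder (· ≤ ·) l u)
    (hu' : IsBoundedUnder (· ≥ ·) l u) (hv : Tendsto v l (𝓝 0)) :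
    liminf (u + v) l = liminf u l := by
  have hv_le := hv.isBoundedUnder_le
  have hv_ge := hv.isBoundedUnder_ge
  refine le_antisymm ?_ ?_
  · simpa [add_comm u, hv.limsup_eq] using
      liminf_add_le hv_ge hv_le hu' hu.isCoboundedUnder_ge
  · simpa [hv.liminf_eq] using le_liminf_add hu' hu hv_ge hv_le.isCoboundedUnder_ge

lemma limsup_add_of_tendsto_zero (hu : IsBoundedUnder (· ≤ ·) l u)
    (hu' : IsBoundedUnder (· ≥ ·) l u) (hv : Tendsto v l (𝓝 0)) :
    limsup (u + v) l = limsup u l := by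
  have hv_le := hv.isBoundedUnder_le
  have hv_ge := hv.isBoundedUnder_ge
  refine le_antisymm ?_ ?_
  · simpa [hv.limsup_eq] using limsup_add_le hu' hu hv_ge.isCoboundedUnder_le hv_le
  · simpa [hv.liminf_eq] using le_limsup_add hu hu'.isCoboundedUnder_le hv_le hv_ge

lemma zero_le_liminf_le_limsup_le_one (h0 : ∀ i, 0 ≤ u i) (h1 : ∀ i, u i ≤ 1) :
    0 ≤ liminf u l ∧ liminf u l ≤ limsup u l ∧ limsup u l ≤ 1 := by
  have hle : IsBoundedUnder (· ≤ ·) l u := isBoundedUnder_of ⟨1, h1⟩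
  have hge : IsBoundedUnder (· ≥ ·) l u := isBoundedUnder_of ⟨0, h0⟩
  exact ⟨le_liminf_of_le hle.isCoboundedUnder_ge (.of_forall h0), liminf_le_limsup hle hge,
    limsup_le_of_le hge.isCoboundedUnder_le (.of_forall h1)⟩

lemma liminf_mul_of_tendsto_one {w : ι → ℝ} (h0 : ∀ i, 0 ≤ u i) (h1 : ∀ i, u i ≤ 1)
    (hw : Tendsto w l (𝓝 1)) : liminf (fun i => u i * w i) l = liminf u l := by
  rw [← liminf_add_of_tendsto_zero (isBoundedUnder_of ⟨1, h1⟩) (isBoundedUnder_of ⟨0, h0⟩)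
    (tendsto_mul_sub_one_zero h0 h1 hw)]
  congr 1 with i
  simp only [Pi.add_apply]
  ring

lemma limsup_mul_of_tendsto_one {w : ι → ℝ} (h0 : ∀ i, 0 ≤ u i) (h1 : ∀ i, u i ≤ 1)
    (hw : Tendsto w l (𝓝 1)) : limsup (fun i => u i * w i) l = limsup u l := by
  rw [← limsup_add_of_tendsto_zero (isBoundedUnder_of ⟨1, h1⟩) (isBoundedUnder_of ⟨0, h0⟩)
    (tendsto_mul_sub_one_zero h0 h1 hw)]
  congr 1 with i
  simp only [Pi.add_apply]
  ring

end LiminfLimsup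

section Counting

lemma card_le_card_mul_of_card_fiber_le {α β : Type*} [Finite α] [Finite β] (f : α → β)
    {k : ℕ} (hk : ∀ b, Nat.card {a // f a = b} ≤ k) : Nat.card α ≤ Nat.card β * k := by
  have := Fintype.ofFinite β
  calc Nat.card α = Nat.card (Σ b, {a // f a = b}) :=
        Nat.card_congr (Equiv.sigmaFiberEquiv f).symm
    _ = ∑ b, Nat.card {a // f a = b} := Nat.card_sigma
    _ ≤ ∑ _b : β, k := Finset.sum_le_sum fun b _ => hk b
    _ = Nat.card β * k := by simp [Nat.card_eq_fintype_card]

lemma card_embedding_le_factorial {α β : Type*} [Finite α] [Finite β] {k : ℕ}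
    (hβ : Nat.card β ≤ k) : Nat.card (α ↪ β) ≤ k.factorial := by
  have := Fintype.ofFinite α
  have := Fintype.ofFinite β
  rw [Nat.card_eq_fintype_card, Fintype.card_embedding_eq, ← Nat.card_eq_fintype_card,
    ← Nat.card_eq_fintype_card]
  refine le_trans ?_ (Nat.factorial_le hβ)
  rcases le_or_gt (Nat.card α) (Nat.card β) with h | h
  · rw [← Nat.factorial_mul_descFactorial h]
    exact Nat.le_mul_of_pos_left _ (Nat.factorial_pos _)
  · rw [Nat.descFactorial_of_lt h]
    exact Nat.zero_le _

/-- A permutation lifting `ρ` along `f` restricts to an embedding of each fibre `f⁻¹ b` into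
`f⁻¹ (ρ b)`, and is determined by these embeddings. -/
lemma card_lifts_le {α β : Type*} [Finite α] [Finite β] (f : α → β) (ρ : β → β)
    {k : ℕ} (hk : ∀ b, Nat.card {a // f a = b} ≤ k) :
    Nat.card {π : Equiv.Perm α // ∀ a, f (π a) = ρ (f a)} ≤ k.factorial ^ Nat.card β := by
  have := Fintype.ofFinite β
  let Φ : {π : Equiv.Perm α // ∀ a, f (π a) = ρ (f a)} →
      ∀ b, {a // f a = b} ↪ {a // f a = ρ b} :=
    fun π b => π.1.toEmbedding.subtypeMap fun a ha => ha ▸ π.2 a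
  have hΦ : Function.Injective Φ := fun π π' h => Subtype.ext <| Equiv.ext fun a =>
    congrArg Subtype.val (DFunLike.congr_fun (congrFun h (f a)) (⟨a, rfl⟩ : {x // f x = f a}))
  calc _ ≤ Nat.card (∀ b, {a // f a = b} ↪ {a // f a = ρ b}) :=
        Nat.card_le_card_of_injective Φ hΦ
    _ = ∏ b, Nat.card ({a // f a = b} ↪ {a // f a = ρ b}) := Nat.card_pi
    _ ≤ ∏ _b : β, k.factorial :=
      Finset.prod_le_prod' fun b _ => card_embedding_le_factorial (hk (ρ b))
    _ = k.factorial ^ Nat.card β := by simp [Nat.card_eq_fintype_card]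

end Counting

section Scales

lemma scaleExp_succ (d n : ℕ) : scaleExp d (n + 1) = scaleExp d n + d ^ n :=
  Finset.sum_range_succ _ _

lemma scaleExp_pos {d : ℕ} (hd : 0 < d) {n : ℕ} (hn : n ≠ 0) : 0 < scaleExp d n :=
  Finset.sum_pos (fun i _ => pow_pos hd i) (Finset.nonempty_range_iff.mpr hn)

lemma sub_one_mul_scaleExp (d n : ℕ) : ((d : ℝ) - 1) * scaleExp d n = (d : ℝ) ^ n - 1 := by
  rw [scaleExp, Nat.cast_sum, mul_comm]
  push_cast
  exact geom_sum_mul _ _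

lemma tendsto_sub_one_mul_scaleExp_div_pow {d : ℕ} (hd : 1 < d) :
    Tendsto (fun n => ((d : ℝ) - 1) * scaleExp d n / (d : ℝ) ^ n) atTop (𝓝 1) := by
  have hpow : Tendsto (fun n => ((d : ℝ) ^ n)⁻¹) atTop (𝓝 0) :=
    tendsto_inv_atTop_zero.comp (tendsto_pow_atTop_atTop_of_one_lt (by exact_mod_cast hd))
  have hd0 : (d : ℝ) ≠ 0 := by positivity
  simpa [sub_one_mul_scaleExp, sub_div, div_self (pow_ne_zero _ hd0)] using hpow.const_sub 1

lemma treeScale_pos (d n : ℕ) : 0 < treeScale d n := by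
  unfold treeScale
  have := d.factorial_pos
  positivity

lemma treeScale_strictAnti {d : ℕ} (hd : 1 < d) : StrictAnti (treeScale d) := by
  intro m n hmn
  have hfac : (1 : ℝ) < d.factorial := by exact_mod_cast Nat.one_lt_factorial.mpr hd
  have hexp : scaleExp d m < scaleExp d n :=
    Finset.sum_lt_sum_of_subset (Finset.range_subset_range.mpr hmn.le)
      (Finset.mem_range.mpr hmn) Finset.notMem_range_self (by positivity)
      (fun _ _ _ => by positivity)
  exact inv_strictAnti₀ (by positivity) (pow_lt_pow_right₀ hfac hexp)

lemma log_one_div_treeScale (d n : ℕ) :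
    Real.log (1 / treeScale d n) = scaleExp d n * Real.log d.factorial := by
  rw [treeScale, one_div, inv_inv, Real.log_pow]

end Scales

section Metric

variable {V : ℕ → Type*} {d n : ℕ} {σ τ : ∀ k, Equiv.Perm (V k)}

/-- The restriction `r_n`, as it appears in `levelCard`. -/
def restrictLevels (n : ℕ) (σ : ∀ k, Equiv.Perm (V k)) :
    ∀ k : Fin (n + 1), Equiv.Perm (V k) :=
  fun k => σ k

lemma levelCard_eq_card_image (G : Set (∀ k, Equiv.Perm (V k))) (n : ℕ) :
    levelCard G n = Nat.card (restrictLevels n '' G) :=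
  rfl

lemma agreeUpTo_iff_restrictLevels_eq :
    AgreeUpTo n σ τ ↔ restrictLevels n σ = restrictLevels n τ :=
  ⟨fun h => funext fun k => h k (Nat.lt_succ_iff.mp k.2),
    fun h k hk => congrFun h ⟨k, Nat.lt_succ_of_le hk⟩⟩

lemma AgreeUpTo.mono {m : ℕ} (h : AgreeUpTo n σ τ) (hmn : m ≤ n) : AgreeUpTo m σ τ :=
  fun k hk => h k (hk.trans hmn)

lemma agreeUpTo_zero [Subsingleton (V 0)] : AgreeUpTo 0 σ τ := by
  intro k hk
  obtain rfl := Nat.le_zero.mp hk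
  exact Subsingleton.elim _ _

lemma treeDist_le_treeScale_of_agreeUpTo (h : AgreeUpTo n σ τ) :
    treeDist d σ τ ≤ treeScale d n :=
  csInf_le ⟨0, by rintro _ ⟨m, -, rfl⟩; exact (treeScale_pos d m).le⟩ ⟨n, h, rfl⟩

lemma agreeUpTo_of_treeDist_le_treeScale [Subsingleton (V 0)] (hd : 1 < d)
    (h : treeDist d σ τ ≤ treeScale d n) : AgreeUpTo n σ τ := by
  by_contra hn
  have hn0 : n ≠ 0 := by rintro rfl; exact hn agreeUpTo_zero
  have hlb : treeScale d (n - 1) ≤ treeDist d σ τ := by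
    refine le_csInf ⟨_, 0, agreeUpTo_zero, rfl⟩ ?_
    rintro _ ⟨j, hj, rfl⟩
    have hjn : j < n := lt_of_not_ge fun hnj => hn (hj.mono hnj)
    exact (treeScale_strictAnti hd).antitone (Nat.le_sub_one_of_lt hjn)
  have := treeScale_strictAnti hd (Nat.sub_one_lt hn0)
  linarith

lemma treeDist_le_treeScale_iff [Subsingleton (V 0)] (hd : 1 < d) :
    treeDist d σ τ ≤ treeScale d n ↔ AgreeUpTo n σ τ :=
  ⟨agreeUpTo_of_treeDist_le_treeScale hd, treeDist_le_treeScale_of_agreeUpTo⟩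

end Metric

section Covering

variable {V : ℕ → Type*} [∀ k, Finite (V k)] [Subsingleton (V 0)] {d : ℕ}

lemma coverNum_eq_levelCard (hd : 1 < d) (G : Set (∀ k, Equiv.Perm (V k))) (n : ℕ) :
    coverNum d G n = levelCard G n := by
  set r := restrictLevels (V := V) n
  have hball : ∀ σ τ, treeDist d σ τ ≤ treeScale d n ↔ r σ = r τ := fun σ τ =>
    (treeDist_le_treeScale_iff hd).trans agreeUpTo_iff_restrictLevels_eq
  have hfin : (r '' G).Finite := Set.toFinite _
  set s := hfin.toFinset.image (Function.invFunOn r G)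
  have hcover : G ⊆ ⋃ σ ∈ s, {τ | treeDist d σ τ ≤ treeScale d n} := by
    intro τ hτ
    refine Set.mem_biUnion (Finset.mem_image_of_mem _ (hfin.mem_toFinset.mpr ⟨τ, hτ, rfl⟩)) ?_
    exact (hball _ _).mpr (Function.invFunOn_eq ⟨τ, hτ, rfl⟩)
  refine le_antisymm ?_ ?_
  · calc coverNum d G n ≤ s.card := Nat.sInf_le ⟨s, rfl, hcover⟩
      _ ≤ hfin.toFinset.card := Finset.card_image_le
      _ = levelCard G n := (Nat.card_eq_card_finite_toFinset hfin).symm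
  · refine le_csInf ⟨s.card, s, rfl, hcover⟩ ?_
    rintro _ ⟨t, rfl, ht⟩
    have hsub : r '' G ⊆ r '' t := by
      rintro _ ⟨τ, hτ, rfl⟩
      obtain ⟨σ, hσ, hστ⟩ := Set.mem_iUnion₂.mp (ht hτ)
      exact ⟨σ, hσ, (hball σ τ).mp hστ⟩
    calc levelCard G n ≤ Nat.card (r '' t) := Nat.card_mono (Set.toFinite _) hsub
      _ ≤ Nat.card t := Nat.card_image_le t.finite_toSet
      _ = t.card := Nat.card_coe_set_eq _ |>.trans (Set.ncard_coe_finset t)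

end Covering

section Levels

variable {V : ℕ → Type*}

lemma levelCard_zero_le_one [Subsingleton (V 0)] (G : Set (∀ k, Equiv.Perm (V k))) :
    levelCard G 0 ≤ 1 := by
  have : Subsingleton (restrictLevels 0 '' G) := by
    refine ⟨?_⟩
    rintro ⟨_, σ, -, rfl⟩ ⟨_, τ, -, rfl⟩
    exact Subtype.ext (agreeUpTo_iff_restrictLevels_eq.mp agreeUpTo_zero)
  rw [levelCard_eq_card_image]
  exact Finite.card_le_one_iff_subsingleton.mpr this

/-- Over a fixed restriction to level `n`, an element of `r_{n+1}(G)` is determined by its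
top permutation, which lifts the level-`n` one along `parent n`. -/
lemma levelCard_succ_le [∀ k, Finite (V k)] (parent : ∀ n, V (n + 1) → V n)
    {G : Set (∀ k, Equiv.Perm (V k))} (hG : G ⊆ autGroup parent) {n k : ℕ}
    (hk : ∀ v, Nat.card {w // parent n w = v} ≤ k) :
    levelCard G (n + 1) ≤ levelCard G n * k.factorial ^ Nat.card (V n) := by
  set I₁ := restrictLevels (n + 1) '' G
  set I₀ := restrictLevels n '' G
  let π : (∀ j : Fin (n + 2), Equiv.Perm (V j)) → ∀ j : Fin (n + 1), Equiv.Perm (V j) :=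
    fun t j => t j.castSucc
  let ρ : I₁ → I₀ := fun t =>
    ⟨π t, by obtain ⟨σ, hσ, h⟩ := t.2; exact ⟨σ, hσ, h ▸ rfl⟩⟩
  have hlift : ∀ t ∈ I₁, ∀ w,
      parent n (t (Fin.last _) w) = π t (Fin.last n) (parent n w) := by
    rintro _ ⟨σ, hσ, rfl⟩ w
    exact hG hσ n w
  refine card_le_card_mul_of_card_fiber_le ρ fun s => ?_
  let top : {t // ρ t = s} → {p : Equiv.Perm (V (n + 1)) // ∀ w,
      parent n (p w) = s.1 (Fin.last n) (parent n w)} :=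
    fun t => ⟨t.1.1 (Fin.last _), fun w => (hlift t.1.1 t.1.2 w).trans
      (congrArg (fun x : I₀ => x.1 (Fin.last n) (parent n w)) t.2)⟩
  have htop : Function.Injective top := by
    intro t t' h
    refine Subtype.ext <| Subtype.ext <| funext fun j => ?_
    induction j using Fin.lastCases with
    | last => exact congrArg Subtype.val h
    | cast j =>
      exact (congrFun (congrArg Subtype.val t.2) j).trans
        (congrFun (congrArg Subtype.val t'.2) j).symm
  exact (Nat.card_le_card_of_injective top htop).trans (card_lifts_le _ _ hk)

end Levels

namespace DaryTree

variable {d : ℕ} (T : DaryTree d)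

instance subsingleton_V_zero : Subsingleton (T.V 0) :=
  (Nat.card_eq_one_iff_unique.mp T.root_card).1

instance finite_V : ∀ n, Finite (T.V n)
  | 0 => Nat.finite_of_card_ne_zero (by rw [T.root_card]; exact one_ne_zero)
  | n + 1 =>
    have := finite_V n
    have (v : T.V n) : Finite {w // T.parent n w = v} :=
      Nat.finite_of_card_ne_zero (Nat.one_le_iff_ne_zero.mp (T.child_lb n v))
    Finite.of_equiv _ (Equiv.sigmaFiberEquiv (T.parent n))

lemma card_V_le : ∀ n, Nat.card (T.V n) ≤ d ^ n
  | 0 => by rw [T.root_card, pow_zero]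
  | n + 1 => calc
      Nat.card (T.V (n + 1)) ≤ Nat.card (T.V n) * d :=
        card_le_card_mul_of_card_fiber_le (T.parent n) (T.child_ub n)
      _ ≤ d ^ (n + 1) := by rw [pow_succ]; exact Nat.mul_le_mul_right d (card_V_le n)

lemma levelCard_le {G : Set (∀ n, Equiv.Perm (T.V n))} (hG : G ⊆ T.aut) :
    ∀ n, levelCard G n ≤ d.factorial ^ scaleExp d n
  | 0 => levelCard_zero_le_one G
  | n + 1 => calc
      levelCard G (n + 1) ≤ levelCard G n * d.factorial ^ Nat.card (T.V n) :=
        levelCard_succ_le T.parent hG (T.child_ub n)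
      _ ≤ d.factorial ^ scaleExp d n * d.factorial ^ d ^ n := by
        gcongr
        · exact levelCard_le hG n
        · exact d.factorial_pos
        · exact T.card_V_le n
      _ = d.factorial ^ scaleExp d (n + 1) := by rw [scaleExp_succ, pow_add]

lemma log_levelCard_le {G : Set (∀ n, Equiv.Perm (T.V n))} (hG : G ⊆ T.aut) (n : ℕ) :
    Real.log (levelCard G n) ≤ scaleExp d n * Real.log d.factorial := by
  rcases (levelCard G n).eq_zero_or_pos with h | h
  · rw [h, Nat.cast_zero, Real.log_zero]
    positivity
  · rw [← Real.log_pow]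
    exact Real.log_le_log (by exact_mod_cast h) (by exact_mod_cast T.levelCard_le hG n)

end DaryTree

theorem arboreal_minkowski_dim_formula_general {d : ℕ} (hd : 2 ≤ d) (T : DaryTree d)
    (G : Subgroup (∀ n, Equiv.Perm (T.V n))) (hGsub : G ≤ T.aut) :
    dimLower d (G : Set (∀ n, Equiv.Perm (T.V n))) =
        ((d : ℝ) - 1) / Real.log (d.factorial : ℝ) *
          Filter.liminf (fun n : ℕ => ((d : ℝ) ^ n)⁻¹ *
            Real.log (levelCard (G : Set (∀ n, Equiv.Perm (T.V n))) n : ℝ)) Filter.atTop ∧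
    dimUpper d (G : Set (∀ n, Equiv.Perm (T.V n))) =
        ((d : ℝ) - 1) / Real.log (d.factorial : ℝ) *
          Filter.limsup (fun n : ℕ => ((d : ℝ) ^ n)⁻¹ *
            Real.log (levelCard (G : Set (∀ n, Equiv.Perm (T.V n))) n : ℝ)) Filter.atTop ∧
    0 ≤ dimLower d (G : Set (∀ n, Equiv.Perm (T.V n))) ∧
    dimLower d (G : Set (∀ n, Equiv.Perm (T.V n))) ≤
      dimUpper d (G : Set (∀ n, Equiv.Perm (T.V n))) ∧
    dimUpper d (G : Set (∀ n, Equiv.Perm (T.V n))) ≤ 1 := by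
  set L := levelCard (G : Set (∀ n, Equiv.Perm (T.V n)))
  set ℓ := Real.log (d.factorial : ℝ)
  have hℓ : 0 < ℓ := Real.log_pos (by exact_mod_cast Nat.one_lt_factorial.mpr hd)
  have hc : 0 < ((d : ℝ) - 1) / ℓ :=
    div_pos (sub_pos.mpr (by exact_mod_cast hd)) hℓ
  have hratio : (fun n => Real.log (coverNum d (G : Set (∀ n, Equiv.Perm (T.V n))) n)
      / Real.log (1 / treeScale d n)) = fun n => Real.log (L n) / (scaleExp d n * ℓ) := by
    funext n
    rw [coverNum_eq_levelCard hd, log_one_div_treeScale]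
  have h0 (n : ℕ) : 0 ≤ Real.log (L n) / (scaleExp d n * ℓ) :=
    div_nonneg (Real.log_natCast_nonneg _) (by positivity)
  have h1 (n : ℕ) : Real.log (L n) / (scaleExp d n * ℓ) ≤ 1 :=
    div_le_one_of_le₀ (T.log_levelCard_le hGsub n) (by positivity)
  have hnormalize : (fun n => ((d : ℝ) - 1) / ℓ * (((d : ℝ) ^ n)⁻¹ * Real.log (L n)))
      =ᶠ[atTop] fun n =>
        Real.log (L n) / (scaleExp d n * ℓ) * (((d : ℝ) - 1) * scaleExp d n / d ^ n) := by
    filter_upwards [eventually_ne_atTop 0] with n hn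
    have : (scaleExp d n : ℝ) ≠ 0 := by exact_mod_cast (scaleExp_pos (by omega) hn).ne'
    field_simp
  rw [dimLower, dimUpper, hratio, ← Real.liminf_const_mul hc, ← Real.limsup_const_mul hc,
    liminf_congr hnormalize, limsup_congr hnormalize,
    liminf_mul_of_tendsto_one h0 h1 (tendsto_sub_one_mul_scaleExp_div_pow hd),
    limsup_mul_of_tendsto_one h0 h1 (tendsto_sub_one_mul_scaleExp_div_pow hd)]
  exact ⟨rfl, rfl, zero_le_liminf_le_limsup_le_one h0 h1⟩

theorem arboreal_minkowski_dim_formula {d : ℕ} (hd : 2 ≤ d) (T : DaryTree d)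
    (G : Subgroup (∀ n, Equiv.Perm (T.V n))) (hGsub : G ≤ T.aut)
    (hGclosed : IsDistClosed d (G : Set (∀ n, Equiv.Perm (T.V n)))) :
    dimLower d (G : Set (∀ n, Equiv.Perm (T.V n))) =
        ((d : ℝ) - 1) / Real.log (d.factorial : ℝ) *
          Filter.liminf (fun n : ℕ => ((d : ℝ) ^ n)⁻¹ *
            Real.log (levelCard (G : Set (∀ n, Equiv.Perm (T.V n))) n : ℝ)) Filter.atTop ∧
    dimUpper d (G : Set (∀ n, Equiv.Perm (T.V n))) =
        ((d : ℝ) - 1) / Real.log (d.factorial : ℝ) *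
          Filter.limsup (fun n : ℕ => ((d : ℝ) ^ n)⁻¹ *
            Real.log (levelCard (G : Set (∀ n, Equiv.Perm (T.V n))) n : ℝ)) Filter.atTop ∧
    0 ≤ dimLower d (G : Set (∀ n, Equiv.Perm (T.V n))) ∧
    dimLower d (G : Set (∀ n, Equiv.Perm (T.V n))) ≤
      dimUpper d (G : Set (∀ n, Equiv.Perm (T.V n))) ∧
    dimUpper d (G : Set (∀ n, Equiv.Perm (T.V n))) ≤ 1 :=
  arboreal_minkowski_dim_formula_general hd T G hGsub
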